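/- For all positive integers n and p, the two closed-form expressions for the power sum agree: Σ_{j=0}^{p} j! · {p+1, j+1} · C(n, j+1) = Σ_{j=0}^{p} (-1)^{p+j} · j! · {p+1, j+1} · C(n+j+1, j+1), where {p+1, j+1} is the Stirling number of the second kind and C denotes the binomial coefficient (both sides equal Σ_{k=1}^{n} k^p). -/

import Mathlib

/-!
Let `F(x) = ∑ⱼ j! S(p+1, j+1) C(x, j+1)` with the generalized binomial coefficient, so that `F`
is defined on all of `ℤ`. Since `(x + 1)^p = ∑ⱼ S(p+1, j+1) x(x-1)⋯(x-j+1)`, Pascal's rule gives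
`F(x + 1) - F(x) = (x + 1)^p`, and `F(0) = 0`. The reflection `x ↦ -1 - x` maps this difference
equation to itself up to the sign `(-1)^(p+1)`, and `F(-1) = F(0) - 0^p = 0` for `p > 0`, hence
`F(n) = (-1)^(p+1) F(-n-1)`. At `x = n` the sum is the left-hand side; at `x = -n-1` the rule
`C(-m, k) = (-1)^k C(m+k-1, k)` turns it into the right-hand side.
-/

/-- Stirling numbers of the second kind. -/
def stirlingSecond : ℕ → ℕ → ℕ
  | 0, 0 => 1
  | 0, _ + 1 => 0
  | _ + 1, 0 => 0
  | n + 1, k + 1 => (k + 1) * stirlingSecond n (k + 1) + stirlingSecond n k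

open Finset Polynomial

theorem stirlingSecond_eq_nat_stirlingSecond : ∀ n k : ℕ,
    stirlingSecond n k = Nat.stirlingSecond n k
  | 0, 0 | 0, _ + 1 | _ + 1, 0 => rfl
  | n + 1, k + 1 => by
    rw [stirlingSecond, Nat.stirlingSecond_succ_succ, stirlingSecond_eq_nat_stirlingSecond n,
      stirlingSecond_eq_nat_stirlingSecond n]

theorem add_one_pow_eq_sum_stirlingSecond_mul_descPochhammer {R : Type*} [CommRing R]
    (p : ℕ) (x : R) :
    (x + 1) ^ p = ∑ j ∈ range (p + 1),
      (Nat.stirlingSecond (p + 1) (j + 1) : R) * (descPochhammer R j).eval x := by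
  induction p with
  | zero => simp [Nat.stirlingSecond_self]
  | succ p ih =>
    set d : ℕ → R := fun j ↦ (descPochhammer R j).eval x
    set S : ℕ → R := fun j ↦ (Nat.stirlingSecond (p + 1) j : R)
    have hmul (j : ℕ) : (x + 1) * d j = d (j + 1) + (j + 1) * d j := by
      simp only [d, descPochhammer_succ_eval]; ring
    have hS_zero : S 0 = 0 := by simp [S]
    have hS_top : S (p + 2) = 0 := by simp [S, Nat.stirlingSecond_eq_zero_of_lt]
    calc (x + 1) ^ (p + 1)
        = ∑ j ∈ range (p + 1), (S (j + 1) * d (j + 1) + (j + 1) * S (j + 1) * d j) := by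
          rw [pow_succ', ih, mul_sum]
          exact sum_congr rfl fun j _ ↦ by rw [mul_left_comm, hmul]; ring
      _ = ∑ j ∈ range (p + 2), S j * d j + ∑ j ∈ range (p + 2), (j + 1) * S (j + 1) * d j := by
          rw [sum_add_distrib, sum_range_succ' _ (p + 1), sum_range_succ _ (p + 1), hS_zero,
            hS_top]
          simp
      _ = ∑ j ∈ range (p + 2), (Nat.stirlingSecond (p + 2) (j + 1) : R) * d j := by
          rw [← sum_add_distrib]
          refine sum_congr rfl fun j _ ↦ ?_
          simp only [S, Nat.stirlingSecond_succ_succ]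
          push_cast
          ring

theorem add_one_pow_eq_sum_stirlingSecond_mul_choose (p : ℕ) (x : ℤ) :
    (x + 1) ^ p = ∑ j ∈ range (p + 1),
      (j.factorial : ℤ) * Nat.stirlingSecond (p + 1) (j + 1) * Ring.choose x j := by
  rw [add_one_pow_eq_sum_stirlingSecond_mul_descPochhammer]
  refine sum_congr rfl fun j _ ↦ ?_
  rw [eval_eq_smeval, Ring.descPochhammer_eq_factorial_smul_choose, nsmul_eq_mul]
  ring

def powerSum (p : ℕ) (x : ℤ) : ℤ :=
  ∑ j ∈ range (p + 1), (j.factorial : ℤ) * Nat.stirlingSecond (p + 1) (j + 1) *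
    Ring.choose x (j + 1)

theorem powerSum_zero (p : ℕ) : powerSum p 0 = 0 := by
  simp [powerSum]

theorem powerSum_add_one (p : ℕ) (x : ℤ) : powerSum p (x + 1) = powerSum p x + (x + 1) ^ p := by
  simp only [powerSum, Ring.choose_succ_succ, add_one_pow_eq_sum_stirlingSecond_mul_choose,
    ← sum_add_distrib]
  exact sum_congr rfl fun j _ ↦ by ring

theorem powerSum_natCast_eq_neg_one_pow_mul {p : ℕ} (hp : p ≠ 0) (n : ℕ) :
    powerSum p n = (-1) ^ (p + 1) * powerSum p (-(n + 1)) := by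
  induction n with
  | zero =>
    have h := powerSum_add_one p (-1)
    rw [neg_add_cancel, powerSum_zero, zero_pow hp, add_zero] at h
    simp [powerSum_zero, ← h]
  | succ n ih =>
    have h := powerSum_add_one p (-(n + 1 + 1))
    have hsq : ((-1 : ℤ) ^ p) ^ 2 = 1 := by rw [← pow_mul, pow_mul', neg_one_sq, one_pow]
    rw [show -((n : ℤ) + 1 + 1) + 1 = -(n + 1) by ring, neg_pow] at h
    push_cast
    rw [powerSum_add_one, ih]
    linear_combination (-1) ^ (p + 1) * h - ((n : ℤ) + 1) ^ p * hsq

theorem powerSum_natCast (p n : ℕ) :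
    powerSum p n = ∑ j ∈ range (p + 1),
      (j.factorial : ℤ) * Nat.stirlingSecond (p + 1) (j + 1) * n.choose (j + 1) := by
  simp only [powerSum, Ring.choose_natCast]

theorem powerSum_neg_natCast_add_one (p n : ℕ) :
    powerSum p (-(n + 1)) = ∑ j ∈ range (p + 1),
      (-1 : ℤ) ^ (j + 1) * j.factorial * Nat.stirlingSecond (p + 1) (j + 1) *
        (n + j + 1).choose (j + 1) := by
  refine sum_congr rfl fun j _ ↦ ?_
  have hcast : (n : ℤ) + 1 + (j + 1 : ℕ) - 1 = (n + j + 1 : ℕ) := by push_cast; ring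
  rw [Ring.choose_neg, hcast, Ring.choose_natCast, Units.smul_def, Int.coe_negOnePow_natCast,
    smul_eq_mul]
  ring

theorem power_sum_closed_forms_agree_general (n p : ℕ) (hp : 0 < p) :
    (∑ j ∈ Finset.range (p + 1),
        (Nat.factorial j : ℤ) * stirlingSecond (p + 1) (j + 1) * Nat.choose n (j + 1)) =
      ∑ j ∈ Finset.range (p + 1),
        (-1 : ℤ) ^ (p + j) * Nat.factorial j * stirlingSecond (p + 1) (j + 1) *
          Nat.choose (n + j + 1) (j + 1) := by
  simp only [stirlingSecond_eq_nat_stirlingSecond]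
  rw [← powerSum_natCast, powerSum_natCast_eq_neg_one_pow_mul hp.ne',
    powerSum_neg_natCast_add_one, mul_sum]
  exact sum_congr rfl fun j _ ↦ by ring

theorem power_sum_closed_forms_agree (n p : ℕ) (hn : 0 < n) (hp : 0 < p) :
    (∑ j ∈ Finset.range (p + 1),
        (Nat.factorial j : ℤ) * stirlingSecond (p + 1) (j + 1) * Nat.choose n (j + 1)) =
      ∑ j ∈ Finset.range (p + 1),
        (-1 : ℤ) ^ (p + j) * Nat.factorial j * stirlingSecond (p + 1) (j + 1) *
          Nat.choose (n + j + 1) (j + 1) :=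
  power_sum_closed_forms_agree_general n p hp
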